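/- The superfidelity is supermultiplicative with respect to tensor products: for density matrices ρ₁, ρ₂, ρ₃, ρ₄, G(ρ₁ ⊗ ρ₂, ρ₃ ⊗ ρ₄) ≥ G(ρ₁,ρ₃)·G(ρ₂,ρ₄). -/

import Mathlib

open Matrix ComplexOrder Kronecker

noncomputable def sG {n : Type*} [Fintype n] [DecidableEq n]
    (ρ σ : Matrix n n ℂ) : ℝ :=
  (trace (ρ * σ)).re +
    Real.sqrt (1 - (trace (ρ * ρ)).re) * Real.sqrt (1 - (trace (σ * σ)).re)

/-!
The overlap `tr (ρσ)` and the purity `tr ρ²` are both multiplicative under `⊗ₖ`, so the claim is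
a real inequality between overlaps `a ≤ √p₁ √q₁`, `b ≤ √p₂ √q₂` (Cauchy–Schwarz for the
Hilbert–Schmidt inner product) and purities `p₁, p₂, q₁, q₂ ∈ [0, 1]`. Expanding
`(a + √(1-p₁) √(1-q₁)) (b + √(1-p₂) √(1-q₂))` and bounding the cross terms through `a` and `b`,
what is left over is Cauchy–Schwarz in `ℝ³` for the decomposition
`1 - p₁ p₂ = p₁ (1 - p₂) + (1 - p₁) p₂ + (1 - p₁) (1 - p₂)`.
-/

namespace Matrix

variable {𝕜 : Type*} [RCLike 𝕜] {n m : Type*} [Fintype n] [Fintype m]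

lemma IsHermitian.im_trace_mul_eq_zero {A B : Matrix n n 𝕜} (hA : A.IsHermitian)
    (hB : B.IsHermitian) : RCLike.im (trace (A * B)) = 0 := by
  rw [← RCLike.conj_eq_iff_im, starRingEnd_apply, ← trace_conjTranspose, conjTranspose_mul,
    hA.eq, hB.eq, trace_mul_comm]

lemma re_trace_kronecker_mul_kronecker (A C : Matrix n n 𝕜) {B D : Matrix m m 𝕜}
    (hB : B.IsHermitian) (hD : D.IsHermitian) :
    RCLike.re (trace (A ⊗ₖ B * C ⊗ₖ D)) =
      RCLike.re (trace (A * C)) * RCLike.re (trace (B * D)) := by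
  rw [← mul_kronecker_mul, trace_kronecker, RCLike.mul_re, hB.im_trace_mul_eq_zero hD, mul_zero,
    sub_zero]

variable [DecidableEq n]

lemma IsHermitian.trace_mul_self {A : Matrix n n 𝕜} (hA : A.IsHermitian) :
    trace (A * A) = ∑ i, ((hA.eigenvalues i ^ 2 : ℝ) : 𝕜) := by
  conv_lhs => rw [hA.spectral_theorem, ← map_mul, Unitary.conjStarAlgAut_apply, trace_mul_cycle,
    Unitary.coe_star_mul_self, one_mul, diagonal_mul_diagonal, trace_diagonal]
  simp [sq]

lemma PosSemidef.re_trace_mul_self_mem_Icc {A : Matrix n n 𝕜} (hA : A.PosSemidef)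
    (ht : trace A = 1) : RCLike.re (trace (A * A)) ∈ Set.Icc 0 1 := by
  have hsum : ∑ i, hA.1.eigenvalues i = 1 := by
    rw [hA.1.trace_eq_sum_eigenvalues, ← RCLike.ofReal_sum] at ht
    exact_mod_cast ht
  rw [hA.1.trace_mul_self, ← RCLike.ofReal_sum, RCLike.ofReal_re]
  refine ⟨by positivity, ?_⟩
  calc ∑ i, hA.1.eigenvalues i ^ 2 ≤ (∑ i, hA.1.eigenvalues i) ^ 2 :=
        Finset.sum_sq_le_sq_sum_of_nonneg fun i _ => hA.eigenvalues_nonneg i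
    _ = 1 := by rw [hsum, one_pow]

lemma IsHermitian.re_trace_mul_le {A B : Matrix n n 𝕜} (hA : A.IsHermitian) (hB : B.IsHermitian) :
    RCLike.re (trace (A * B)) ≤ √(RCLike.re (trace (A * A))) * √(RCLike.re (trace (B * B))) := by
  -- the Hilbert–Schmidt inner product `⟪X, Y⟫ = tr (Y * Xᴴ)`
  let := (1 : Matrix n n 𝕜).toMatrixSeminormedAddCommGroup PosSemidef.one
  let := (1 : Matrix n n 𝕜).toMatrixInnerProductSpace PosSemidef.one
  have hinner (X Y : Matrix n n 𝕜) : inner 𝕜 X Y = trace (Y * Xᴴ) := by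
    change trace (Y * 1 * Xᴴ) = _
    rw [mul_one]
  have hnorm (X : Matrix n n 𝕜) : ‖X‖ = √(RCLike.re (trace (X * Xᴴ))) := by
    rw [@norm_eq_sqrt_re_inner 𝕜, hinner]
  have := re_inner_le_norm (𝕜 := 𝕜) A B
  rwa [hinner, hnorm, hnorm, hA.eq, hB.eq, trace_mul_comm] at this

end Matrix

noncomputable def sGReal (overlap p q : ℝ) : ℝ :=
  overlap + √(1 - p) * √(1 - q)

lemma sG_eq_sGReal {n : Type*} [Fintype n] [DecidableEq n] (ρ σ : Matrix n n ℂ) :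
    sG ρ σ = sGReal (trace (ρ * σ)).re (trace (ρ * ρ)).re (trace (σ * σ)).re :=
  rfl

lemma le_sqrt_one_sub_mul_mul_sqrt_one_sub_mul {p₁ p₂ q₁ q₂ : ℝ}
    (hp₁ : p₁ ∈ Set.Icc 0 1) (hp₂ : p₂ ∈ Set.Icc 0 1)
    (hq₁ : q₁ ∈ Set.Icc 0 1) (hq₂ : q₂ ∈ Set.Icc 0 1) :
    √(p₁ * (1 - p₂)) * √(q₁ * (1 - q₂)) + √((1 - p₁) * p₂) * √((1 - q₁) * q₂)
        + √((1 - p₁) * (1 - p₂)) * √((1 - q₁) * (1 - q₂))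
      ≤ √(1 - p₁ * p₂) * √(1 - q₁ * q₂) := by
  obtain ⟨hp₁0, hp₁1⟩ := hp₁
  obtain ⟨hp₂0, hp₂1⟩ := hp₂
  obtain ⟨hq₁0, hq₁1⟩ := hq₁
  obtain ⟨hq₂0, hq₂1⟩ := hq₂
  have := Real.sum_sqrt_mul_sqrt_le Finset.univ
    (f := ![p₁ * (1 - p₂), (1 - p₁) * p₂, (1 - p₁) * (1 - p₂)])
    (g := ![q₁ * (1 - q₂), (1 - q₁) * q₂, (1 - q₁) * (1 - q₂)])
    (fun i => by fin_cases i <;> simp <;> positivity)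
    (fun i => by fin_cases i <;> simp <;> positivity)
  simp only [Fin.sum_univ_three, Matrix.cons_val] at this
  convert this using 3 <;> ring

theorem sGReal_mul_le {a b p₁ p₂ q₁ q₂ : ℝ}
    (hp₁ : p₁ ∈ Set.Icc 0 1) (hp₂ : p₂ ∈ Set.Icc 0 1)
    (hq₁ : q₁ ∈ Set.Icc 0 1) (hq₂ : q₂ ∈ Set.Icc 0 1)
    (ha : a ≤ √p₁ * √q₁) (hb : b ≤ √p₂ * √q₂) :
    sGReal a p₁ q₁ * sGReal b p₂ q₂ ≤ sGReal (a * b) (p₁ * p₂) (q₁ * q₂) := by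
  have hcs := le_sqrt_one_sub_mul_mul_sqrt_one_sub_mul hp₁ hp₂ hq₁ hq₂
  simp only [Real.sqrt_mul hp₁.1, Real.sqrt_mul hq₁.1, Real.sqrt_mul (sub_nonneg.2 hp₁.2),
    Real.sqrt_mul (sub_nonneg.2 hq₁.2)] at hcs
  have ha' := mul_le_mul_of_nonneg_right ha
    (mul_nonneg (Real.sqrt_nonneg (1 - p₂)) (Real.sqrt_nonneg (1 - q₂)))
  have hb' := mul_le_mul_of_nonneg_left hb
    (mul_nonneg (Real.sqrt_nonneg (1 - p₁)) (Real.sqrt_nonneg (1 - q₁)))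
  unfold sGReal
  linear_combination ha' + hb' + hcs

theorem superfidelity_supermultiplicative {N M : ℕ}
    (ρ₁ ρ₃ : Matrix (Fin N) (Fin N) ℂ) (ρ₂ ρ₄ : Matrix (Fin M) (Fin M) ℂ)
    (h₁ : ρ₁.PosSemidef) (h₂ : ρ₂.PosSemidef)
    (h₃ : ρ₃.PosSemidef) (h₄ : ρ₄.PosSemidef)
    (ht₁ : trace ρ₁ = 1) (ht₂ : trace ρ₂ = 1)
    (ht₃ : trace ρ₃ = 1) (ht₄ : trace ρ₄ = 1) :
    sG ρ₁ ρ₃ * sG ρ₂ ρ₄ ≤ sG (ρ₁ ⊗ₖ ρ₂) (ρ₃ ⊗ₖ ρ₄) := by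
  simp only [sG_eq_sGReal, ← RCLike.re_to_complex]
  rw [re_trace_kronecker_mul_kronecker _ _ h₂.1 h₄.1,
    re_trace_kronecker_mul_kronecker _ _ h₂.1 h₂.1, re_trace_kronecker_mul_kronecker _ _ h₄.1 h₄.1]
  exact sGReal_mul_le (h₁.re_trace_mul_self_mem_Icc ht₁) (h₂.re_trace_mul_self_mem_Icc ht₂)
    (h₃.re_trace_mul_self_mem_Icc ht₃) (h₄.re_trace_mul_self_mem_Icc ht₄)
    (h₁.1.re_trace_mul_le h₃.1) (h₂.1.re_trace_mul_le h₄.1)
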